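/- arXiv:1906.02587 — 5 statements merged into one kernel-verified Lean document; each statement's English description precedes it below -/
import Mathlib

section
/- Let H : ℂ^n → ℂ^m and G : ℂ^n → ℂ^ℓ be holomorphic maps (defined near the unit sphere S^{2n-1}) with H(S^{2n-1}) ⊆ S^{2m-1} and G(S^{2n-1}) ⊆ S^{2ℓ-1}, and let A ⊆ ℂ^m be a complex linear subspace with orthogonal complement A^⊥. If X : ℂ^n → ℂ^m is holomorphic and satisfies Re(X(z) · conj(H(z))) = 0 for all z ∈ S^{2n-1}, then Y := (X_A ⊗ G) ⊕ X_{A^⊥} satisfies Re(Y(z) · conj(F(z))) = 0 for all z ∈ S^{2n-1}, where F := (H_A ⊗ G) ⊕ H_{A^⊥} and v_A, v_{A^⊥} denote orthogonal projections onto A and A^⊥. -/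
open Finset

/-!
Since `G` maps the sphere into the sphere, `∑ₖ |G_k|² = 1` there, so the `A`-block of the pairing
`Y · conj F` collapses to `X_A · conj H_A`. What remains is `⟪H_A, X_A⟫ + ⟪H_{A^⊥}, X_{A^⊥}⟫`,
which equals `⟪H, X⟫ = X · conj H` because `A` and `A^⊥` are orthogonal.
-/

theorem sum_tensor_mul_conj_tensor {𝕜 ι κ : Type*} [RCLike 𝕜] [Fintype ι] [Fintype κ]
    (a b : ι → 𝕜) (g : κ → 𝕜) :
    ∑ p : ι × κ, (a p.1 * g p.2) * starRingEnd 𝕜 (b p.1 * g p.2) =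
      (∑ i, a i * starRingEnd 𝕜 (b i)) * ((∑ k, ‖g k‖ ^ 2 : ℝ) : 𝕜) := by
  rw [Fintype.sum_prod_type, RCLike.ofReal_sum, Finset.sum_mul_sum]
  refine sum_congr rfl fun i _ => sum_congr rfl fun k _ => ?_
  rw [RCLike.ofReal_pow, ← RCLike.mul_conj, map_mul]
  ring

theorem Submodule.inner_eq_inner_orthogonalProjectionOnto_add {𝕜 E : Type*} [RCLike 𝕜]
    [NormedAddCommGroup E] [InnerProductSpace 𝕜 E] (K : Submodule 𝕜 E)
    [K.HasOrthogonalProjection] (x y : E) :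
    inner 𝕜 x y =
      inner 𝕜 (K.orthogonalProjectionOnto x : E) (K.orthogonalProjectionOnto y : E) +
        inner 𝕜 (Kᗮ.orthogonalProjectionOnto x : E) (Kᗮ.orthogonalProjectionOnto y : E) := by
  rw [← K.coe_inner, ← Kᗮ.coe_inner, inner_orthogonalProjectionOnto_eq_of_mem_left,
    inner_orthogonalProjectionOnto_eq_of_mem_left, ← inner_add_left]
  exact congrArg (inner 𝕜 · y) (K.starProjection_add_starProjection_orthogonal x).symm

theorem EuclideanSpace.inner_eq_sum_mul_conj {𝕜 ι : Type*} [RCLike 𝕜] [Fintype ι]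
    (x y : EuclideanSpace 𝕜 ι) :
    inner 𝕜 x y = ∑ i, y i * starRingEnd 𝕜 (x i) :=
  rfl

theorem tensor_of_infinitesimal_deformation_general
    (n m l : ℕ)
    (H : EuclideanSpace ℂ (Fin n) → EuclideanSpace ℂ (Fin m))
    (G : EuclideanSpace ℂ (Fin n) → EuclideanSpace ℂ (Fin l))
    (X : EuclideanSpace ℂ (Fin n) → EuclideanSpace ℂ (Fin m))
    (hGsphere : ∀ z, (∑ i, ‖z i‖ ^ 2 = 1) → ∑ j, ‖G z j‖ ^ 2 = 1)
    (A : Submodule ℂ (EuclideanSpace ℂ (Fin m)))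
    (hXdef : ∀ z, (∑ i, ‖z i‖ ^ 2 = 1) →
      (∑ j, X z j * (starRingEnd ℂ) (H z j)).re = 0) :
    ∀ z, (∑ i, ‖z i‖ ^ 2 = 1) →
      ((∑ p : Fin m × Fin l,
          ((A.orthogonalProjectionOnto (X z) : EuclideanSpace ℂ (Fin m)) p.1 * G z p.2) *
            (starRingEnd ℂ)
              (((A.orthogonalProjectionOnto (H z) : EuclideanSpace ℂ (Fin m)) p.1) * G z p.2)) +
        ∑ j, ((Aᗮ.orthogonalProjectionOnto (X z) : EuclideanSpace ℂ (Fin m)) j) *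
          (starRingEnd ℂ)
            ((Aᗮ.orthogonalProjectionOnto (H z) : EuclideanSpace ℂ (Fin m)) j)).re = 0 := by
  intro z hz
  rw [sum_tensor_mul_conj_tensor, hGsphere z hz, RCLike.ofReal_one, mul_one,
    ← EuclideanSpace.inner_eq_sum_mul_conj, ← EuclideanSpace.inner_eq_sum_mul_conj,
    ← A.inner_eq_inner_orthogonalProjectionOnto_add, EuclideanSpace.inner_eq_sum_mul_conj]
  exact hXdef z hz

/-- If `X` is an infinitesimal deformation of the sphere map `H`
(`Re(X · conj H) = 0` on the sphere), then its tensor product by a sphere map `G` on a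
subspace `A`, namely `Y = (X_A ⊗ G) ⊕ X_{A^⊥}`, is an infinitesimal deformation of the
tensored map `F = (H_A ⊗ G) ⊕ H_{A^⊥}`. -/
theorem tensor_of_infinitesimal_deformation
    (n m l : ℕ)
    (U : Set (EuclideanSpace ℂ (Fin n))) (hUopen : IsOpen U)
    (hUS : {z : EuclideanSpace ℂ (Fin n) | ∑ i, ‖z i‖ ^ 2 = 1} ⊆ U)
    (H : EuclideanSpace ℂ (Fin n) → EuclideanSpace ℂ (Fin m))
    (G : EuclideanSpace ℂ (Fin n) → EuclideanSpace ℂ (Fin l))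
    (X : EuclideanSpace ℂ (Fin n) → EuclideanSpace ℂ (Fin m))
    (hH : DifferentiableOn ℂ H U) (hG : DifferentiableOn ℂ G U)
    (hX : DifferentiableOn ℂ X U)
    (hHsphere : ∀ z, (∑ i, ‖z i‖ ^ 2 = 1) → ∑ j, ‖H z j‖ ^ 2 = 1)
    (hGsphere : ∀ z, (∑ i, ‖z i‖ ^ 2 = 1) → ∑ j, ‖G z j‖ ^ 2 = 1)
    (A : Submodule ℂ (EuclideanSpace ℂ (Fin m)))
    (hXdef : ∀ z, (∑ i, ‖z i‖ ^ 2 = 1) →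
      (∑ j, X z j * (starRingEnd ℂ) (H z j)).re = 0) :
    ∀ z, (∑ i, ‖z i‖ ^ 2 = 1) →
      ((∑ p : Fin m × Fin l,
          ((A.orthogonalProjectionOnto (X z) : EuclideanSpace ℂ (Fin m)) p.1 * G z p.2) *
            (starRingEnd ℂ)
              (((A.orthogonalProjectionOnto (H z) : EuclideanSpace ℂ (Fin m)) p.1) * G z p.2)) +
        ∑ j, ((Aᗮ.orthogonalProjectionOnto (X z) : EuclideanSpace ℂ (Fin m)) j) *
          (starRingEnd ℂ)
            ((Aᗮ.orthogonalProjectionOnto (H z) : EuclideanSpace ℂ (Fin m)) j)).re = 0 :=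
  tensor_of_infinitesimal_deformation_general n m l H G X hGsphere A hXdef
end

section
/- The homogeneous sphere map H_n^d is holomorphically nondegenerate: if X : ℂ^n → ℂ^{K(n,d)} has holomorphic polynomial components and X(z) · conj(H_n^d(z)) = 0 for all z ∈ S^{2n-1}, then X ≡ 0. -/
open Finset Metric ComplexConjugate

/-! For `z ≠ 0` and `|t| = 1 / |z|` the point `t z` lies on the sphere, and since
`H_α(z) = c_α z^α` is homogeneous of degree `d`, the hypothesis at `t z` says that the polynomial
`t ↦ ∑ X_α(t z) c_α conj(z)^α` vanishes on a circle, hence everywhere. Taking `t = 1` (and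
continuity at `z = 0`), `z ↦ ∑ X_α(z) c_α conj(z)^α` vanishes on all of `ℂⁿ`. Substituting
`z = x + i y` makes this a polynomial identity in the real variables `x, y`, so the polarization
`(z, w) ↦ ∑ X_α(z) c_α w^α` is the zero polynomial, and comparing the coefficients of `w^α` gives
`X_α = 0`. -/

theorem Polynomial.eq_zero_of_forall_mem_sphere_eval_eq_zero {q : Polynomial ℂ} {r : ℝ}
    (hr : 0 < r) (h : ∀ t ∈ sphere (0 : ℂ) r, q.eval t = 0) : q = 0 := by
  have hsphere : (sphere (0 : ℂ) r).Infinite := by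
    refine (isPreconnected_sphere (by simp [Complex.rank_real_complex]) 0 r).infinite_of_nontrivial
      ⟨r, by simp [hr.le], -r, by simp [hr.le], by simp [Complex.ext_iff]; linarith⟩
  exact q.eq_zero_of_infinite_isRoot (hsphere.mono h)

namespace MvPolynomial

theorem eval_eq_zero_of_forall_mem_sphere_eval_smul_eq_zero {σ : Type*} (p : MvPolynomial σ ℂ)
    (z : σ → ℂ) {r : ℝ} (hr : 0 < r) (h : ∀ t ∈ sphere (0 : ℂ) r, eval (t • z) p = 0) :
    eval z p = 0 := by
  set q : Polynomial ℂ := aeval (fun i => Polynomial.C (z i) * Polynomial.X) p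
  have hq : ∀ t, q.eval t = eval (t • z) p := fun t => by
    rw [← Polynomial.coe_aeval_eq_eval, ← AlgHom.comp_apply, comp_aeval, ← aeval_eq_eval]
    congr 2
    ext i
    simpa using mul_comm (z i) t
  have hq0 : q = 0 := Polynomial.eq_zero_of_forall_mem_sphere_eval_eq_zero hr fun t ht => by
    rw [hq]; exact h t ht
  simpa [hq0] using (hq 1).symm

theorem eq_zero_of_forall_eval_ofReal_eq_zero {σ : Type*} (p : MvPolynomial σ ℂ)
    (h : ∀ x : σ → ℝ, eval (fun i => (x i : ℂ)) p = 0) : p = 0 := by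
  refine funext_set (fun _ => Set.range ((↑) : ℝ → ℂ))
    (fun _ => Set.infinite_range_of_injective Complex.ofReal_injective) fun z hz => ?_
  choose x hx using fun i => hz i (Set.mem_univ i)
  simpa [← _root_.funext hx] using h x

open Complex in
theorem eq_zero_of_forall_eval_conj_eq_zero {σ : Type*} (p : MvPolynomial (σ ⊕ σ) ℂ)
    (h : ∀ z : σ → ℂ, eval (Sum.elim z fun i => conj (z i)) p = 0) : p = 0 := by
  obtain ⟨q, hq⟩ : ∃ q : MvPolynomial (σ ⊕ σ) ℂ, ∀ v, eval v q =
      eval (Sum.elim (fun i => v (.inl i) + I * v (.inr i))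
        fun i => v (.inl i) - I * v (.inr i)) p := by
    refine ⟨bind₁ (Sum.elim (fun i => X (.inl i) + C I * X (.inr i))
      fun i => X (.inl i) - C I * X (.inr i)) p, fun v => ?_⟩
    rw [← aeval_eq_eval, aeval_bind₁, aeval_eq_eval]
    congr 2
    ext (i | i) <;> simp
  have hq0 : q = 0 := by
    refine eq_zero_of_forall_eval_ofReal_eq_zero q fun x => ?_
    rw [hq]
    convert h fun i => x (.inl i) + I * x (.inr i) using 3
    ext i
    simp [conj_ofReal, sub_eq_add_neg]
  refine funext fun v => ?_
  calc eval v p = eval (Sum.elim (fun i => (v (.inl i) + v (.inr i)) / 2)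
        fun i => (v (.inl i) - v (.inr i)) / (2 * I)) q := by
          rw [hq]; congr 1; ext (i | i) <;> simp <;> field_simp <;> ring
    _ = eval v 0 := by rw [hq0, map_zero, map_zero]

theorem eq_zero_of_forall_ne_zero_eval_conj_eq_zero {σ : Type*} [Fintype σ] [Nonempty σ]
    (p : MvPolynomial (σ ⊕ σ) ℂ)
    (h : ∀ z : σ → ℂ, z ≠ 0 → eval (Sum.elim z fun i => conj (z i)) p = 0) : p = 0 := by
  refine eq_zero_of_forall_eval_conj_eq_zero p fun z => ?_
  have hcont : Continuous fun z : σ → ℂ => eval (Sum.elim z fun i => conj (z i)) p :=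
    (continuous_eval p).comp <| continuous_pi fun
      | .inl i => continuous_apply i
      | .inr i => Complex.continuous_conj.comp (continuous_apply i)
  exact congrFun (hcont.ext_on (dense_compl_singleton 0) continuous_const h) z

theorem eq_zero_of_forall_sum_mul_prod_pow_eq_zero {R : Type*} [CommRing R] [IsDomain R]
    [Infinite R] {σ : Type*} [Fintype σ] {s : Finset (σ → ℕ)} {a : (σ → ℕ) → R}
    (h : ∀ w : σ → R, ∑ α ∈ s, a α * ∏ i, w i ^ α i = 0) {α : σ → ℕ} (hα : α ∈ s) :
    a α = 0 := by
  classical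
  set q : MvPolynomial σ R := ∑ β ∈ s, monomial (Finsupp.equivFunOnFinite.symm β) (a β)
  have hq : q = 0 := funext fun w => by
    simpa [q, eval_monomial, Finsupp.prod_fintype] using h w
  simpa [q, coeff_sum, coeff_monomial, hα] using
    congrArg (coeff (Finsupp.equivFunOnFinite.symm α)) hq

end MvPolynomial

section PolarizedPairing

open MvPolynomial

variable {σ : Type*} [Fintype σ] (s : Finset (σ → ℕ)) (f : (σ → ℕ) → MvPolynomial σ ℂ)
  (c : (σ → ℕ) → ℝ)

/-- At `w = conj z` this is `f(z) · conj (H(z))` for the map `H = (c_α z^α)_{α ∈ s}`. -/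
noncomputable def polarizedPairing : MvPolynomial (σ ⊕ σ) ℂ :=
  ∑ α ∈ s, rename Sum.inl (f α) * C (c α : ℂ) * ∏ i, X (Sum.inr i) ^ α i

theorem eval_polarizedPairing (z w : σ → ℂ) :
    eval (Sum.elim z w) (polarizedPairing s f c) =
      ∑ α ∈ s, eval z (f α) * (c α * ∏ i, w i ^ α i) := by
  simp only [polarizedPairing, map_sum, map_mul, map_prod, map_pow, eval_rename, eval_C, eval_X,
    Sum.elim_inr, Sum.elim_comp_inl, mul_assoc]

variable {s f c}

theorem eval_conj_polarizedPairing_eq_zero {d : ℕ} (hs : ∀ α ∈ s, ∑ i, α i = d)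
    (hf : ∀ z : σ → ℂ, ∑ i, ‖z i‖ ^ 2 = 1 →
      ∑ α ∈ s, eval z (f α) * conj ((c α : ℂ) * ∏ i, z i ^ α i) = 0)
    {z : σ → ℂ} (hz : z ≠ 0) :
    eval (Sum.elim z fun i => conj (z i)) (polarizedPairing s f c) = 0 := by
  set p : MvPolynomial σ ℂ := ∑ α ∈ s, C ((c α : ℂ) * ∏ i, conj (z i) ^ α i) * f α
  have hp : ∀ w, eval w p = ∑ α ∈ s, eval w (f α) * ((c α : ℂ) * ∏ i, conj (z i) ^ α i) :=
    fun w => by simp only [p, map_sum, map_mul, eval_C, mul_comm]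
  have hS : 0 < ∑ i, ‖z i‖ ^ 2 := by
    obtain ⟨i, hi⟩ := Function.ne_iff.mp hz
    exact sum_pos' (fun _ _ => by positivity) ⟨i, mem_univ i, pow_pos (norm_pos_iff.mpr hi) 2⟩
  rw [eval_polarizedPairing, ← hp]
  refine eval_eq_zero_of_forall_mem_sphere_eval_smul_eq_zero p z
    (inv_pos.mpr (Real.sqrt_pos.mpr hS)) fun t ht => ?_
  rw [mem_sphere_zero_iff_norm] at ht
  have hunit : ∑ i, ‖(t • z) i‖ ^ 2 = 1 := by
    simp only [Pi.smul_apply, smul_eq_mul, norm_mul, mul_pow, ← Finset.mul_sum, ht, inv_pow,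
      Real.sq_sqrt hS.le, inv_mul_cancel₀ hS.ne']
  have hscale : ∀ α ∈ s, conj ((c α : ℂ) * ∏ i, (t • z) i ^ α i) =
      conj t ^ d * ((c α : ℂ) * ∏ i, conj (z i) ^ α i) := fun α hα => by
    simp only [Pi.smul_apply, smul_eq_mul, mul_pow, Finset.prod_mul_distrib,
      Finset.prod_pow_eq_pow_sum, hs α hα, map_mul, map_prod, map_pow, Complex.conj_ofReal]
    ring
  have hsum := hf (t • z) hunit
  rw [Finset.sum_congr rfl fun α hα => by rw [hscale α hα]] at hsum
  simp_rw [mul_left_comm _ (conj t ^ d), ← Finset.mul_sum, ← hp] at hsum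
  have ht0 : t ≠ 0 := norm_pos_iff.mp (ht ▸ inv_pos.mpr (Real.sqrt_pos.mpr hS))
  exact (mul_eq_zero.mp hsum).resolve_left (pow_ne_zero _ ((map_ne_zero _).mpr ht0))

theorem eq_zero_of_polarizedPairing_eq_zero (h : polarizedPairing s f c = 0) {α : σ → ℕ}
    (hα : α ∈ s) (hc : c α ≠ 0) : f α = 0 := by
  refine funext fun z => ?_
  have hcoeff : eval z (f α) * c α = 0 :=
    eq_zero_of_forall_sum_mul_prod_pow_eq_zero (a := fun β => eval z (f β) * c β) (fun w => by
      simpa [eval_polarizedPairing, mul_assoc] using congrArg (eval (Sum.elim z w)) h) hα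
  simpa [hc] using hcoeff

end PolarizedPairing

/-- The homogeneous sphere map `H_n^d` is holomorphically
nondegenerate: if `X` has holomorphic polynomial components (indexed by the
multiindices `α` with `|α| = d`) and `X(z) · conj (H_n^d(z)) = 0` for all
`z ∈ S^{2n-1}`, then `X ≡ 0`. -/
theorem homogeneous_map_holomorphically_nondegenerate (n d : ℕ) (hn : 1 ≤ n)
    (X : (Fin n → ℕ) → MvPolynomial (Fin n) ℂ)
    (hX : ∀ z : Fin n → ℂ, (∑ i, ‖z i‖ ^ 2 = 1) →
      ∑ α ∈ Finset.piAntidiag (Finset.univ : Finset (Fin n)) d,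
        MvPolynomial.eval z (X α) *
          (starRingEnd ℂ)
            ((Real.sqrt (Nat.multinomial Finset.univ α) : ℂ) * ∏ i, z i ^ α i) = 0) :
    ∀ α ∈ Finset.piAntidiag (Finset.univ : Finset (Fin n)) d, X α = 0 := by
  have : Nonempty (Fin n) := ⟨⟨0, hn⟩⟩
  have hpair : polarizedPairing (piAntidiag univ d) X (fun α => √(Nat.multinomial univ α)) = 0 :=
    MvPolynomial.eq_zero_of_forall_ne_zero_eval_conj_eq_zero _ fun _ hz =>
      eval_conj_polarizedPairing_eq_zero (fun _ hα => (mem_piAntidiag.mp hα).1) hX hz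
  intro α hα
  exact eq_zero_of_polarizedPairing_eq_zero hpair hα
    (Real.sqrt_pos.mpr (mod_cast Nat.multinomial_pos _ _)).ne'
end

section
/- Let H : S^{2n-1} → S^{2m-1} be a rational sphere map of degree d with reflection matrix V of size K(n,d) × m. If K(n,d) < m, then H is holomorphically degenerate: there exists a nontrivial holomorphic polynomial map Y : ℂ^n → ℂ^m with Y(z) · conj(H(z)) = 0 for all z ∈ S^{2n-1}. -/
/-!
On the sphere the form `∑ zᵢ wᵢ` equals `1` at `w = conj z`. Multiplying the homogeneous
components of `conj Pⱼ` by suitable powers of it gives polynomials `Sⱼ` in `w`, homogeneous of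
degree `d` with coefficients in `ℂ[z]`, that agree with `conj Pⱼ(z)` on the sphere at `w = conj z`;
their coefficients form the reflection matrix `V`. Homogeneous polynomials of degree `d` in `n` variables
form a free `ℂ[z]`-module of rank `K(n,d) < m`, so these `m` polynomials satisfy a nontrivial
`ℂ[z]`-linear relation `∑ Yⱼ Sⱼ = 0`. Evaluating at `w = conj z` and dividing by `conj Q` gives
`Y · conj H = 0`.
-/

open Finset ComplexConjugate

namespace MvPolynomial

variable {σ R : Type*}

instance [Finite σ] [CommSemiring R] (d : ℕ) :
    Module.Finite R (homogeneousSubmodule σ R d) :=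
  Module.Finite.iff_fg.mpr (homogeneousSubmodule_fg σ R d)

theorem finrank_homogeneousSubmodule [Fintype σ] [CommRing R] [Nontrivial R] (d : ℕ) :
    Module.finrank R (homogeneousSubmodule σ R d) = (Fintype.card σ + d - 1).choose d := by
  classical
  have hset : {α : σ →₀ ℕ | α.degree = d} = ((univ : Finset σ).finsuppAntidiag d : Set _) := by
    ext α; simp [mem_finsuppAntidiag, Finsupp.degree_eq_sum]
  rw [homogeneousSubmodule_eq_finsupp_supported,
    ← restrictSupport, Module.finrank_eq_nat_card_basis (basisRestrictSupport R _), hset,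
    Nat.card_coe_set_eq, Set.ncard_coe_finset, card_finsuppAntidiag_nat_eq_choose, card_univ]

theorem exists_nontrivial_relation_of_isHomogeneous [Fintype σ] [CommRing R] [Nontrivial R]
    {ι : Type*} [Fintype ι] {d : ℕ} (hcard : (Fintype.card σ + d - 1).choose d < Fintype.card ι)
    {S : ι → MvPolynomial σ R} (hS : ∀ j, (S j).IsHomogeneous d) :
    ∃ g : ι → R, ∑ j, g j • S j = 0 ∧ ∃ j, g j ≠ 0 := by
  let S' : ι → homogeneousSubmodule σ R d := fun j => ⟨S j, hS j⟩
  have hdep : ¬ LinearIndependent R S' := fun h =>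
    (h.fintype_card_le_finrank.trans_eq (finrank_homogeneousSubmodule d)).not_gt hcard
  obtain ⟨g, hg, hg0⟩ := Fintype.not_linearIndependent_iff.mp hdep
  exact ⟨g, by simpa [S'] using congrArg Subtype.val hg, hg0⟩

theorem sum_homogeneousComponent_of_totalDegree_le [CommSemiring R] {p : MvPolynomial σ R}
    {d : ℕ} (hp : p.totalDegree ≤ d) :
    ∑ k ∈ range (d + 1), homogeneousComponent k p = p := by
  rw [← sum_subset (range_subset_range.mpr (Nat.succ_le_succ hp)), sum_homogeneousComponent]
  intro k _ hk
  exact homogeneousComponent_eq_zero k p (by simpa using hk)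

section PairingHomogenization

variable [Fintype σ] [CommSemiring R]

noncomputable def pairing : MvPolynomial σ (MvPolynomial σ R) :=
  ∑ i, C (X i) * X i

noncomputable def pairingHomogenization (d : ℕ) (p : MvPolynomial σ R) :
    MvPolynomial σ (MvPolynomial σ R) :=
  ∑ k ∈ range (d + 1), pairing ^ (d - k) * (homogeneousComponent k p).map C

theorem isHomogeneous_pairing : (pairing : MvPolynomial σ (MvPolynomial σ R)).IsHomogeneous 1 :=
  IsHomogeneous.sum _ _ _ fun i _ => isHomogeneous_C_mul_X _ i

theorem isHomogeneous_pairingHomogenization (d : ℕ) (p : MvPolynomial σ R) :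
    (pairingHomogenization d p).IsHomogeneous d := by
  refine IsHomogeneous.sum _ _ _ fun k hk => ?_
  have hkd : d - k + k = d := Nat.sub_add_cancel (Nat.lt_succ_iff.mp (mem_range.mp hk))
  simpa [hkd] using (isHomogeneous_pairing.pow (d - k)).mul
    ((homogeneousComponent_isHomogeneous k p).map C)

theorem eval₂_pairingHomogenization {z w : σ → R} (hzw : ∑ i, z i * w i = 1) {d : ℕ}
    {p : MvPolynomial σ R} (hp : p.totalDegree ≤ d) :
    eval₂ (eval z) w (pairingHomogenization d p) = eval w p := by
  have hpairing : eval₂ (eval z) w (pairing : MvPolynomial σ (MvPolynomial σ R)) = 1 := by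
    simpa [pairing] using hzw
  have hmap : ∀ q : MvPolynomial σ R, eval₂ (eval z) w (q.map C) = eval w q := by
    intro q
    rw [eval₂_map, show (eval z).comp C = RingHom.id R from RingHom.ext eval_C, eval₂_id]
  simp only [pairingHomogenization, eval₂_sum, eval₂_mul, eval₂_pow, hpairing, one_pow, one_mul,
    hmap, ← map_sum, sum_homogeneousComponent_of_totalDegree_le hp]

end PairingHomogenization

theorem exists_sum_eval_mul_conj_eval_eq_zero_on_sphere [Fintype σ] {ι : Type*} [Fintype ι]
    {d : ℕ} (hcard : (Fintype.card σ + d - 1).choose d < Fintype.card ι)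
    (P : ι → MvPolynomial σ ℂ) (hP : ∀ j, (P j).totalDegree ≤ d) :
    ∃ Y : ι → MvPolynomial σ ℂ, (∃ j, Y j ≠ 0) ∧ ∀ z : σ → ℂ, ∑ i, ‖z i‖ ^ 2 = 1 →
      ∑ j, eval z (Y j) * conj (eval z (P j)) = 0 := by
  obtain ⟨Y, hY, hY0⟩ := exists_nontrivial_relation_of_isHomogeneous hcard
    (S := fun j => pairingHomogenization d ((P j).map conj))
    fun j => isHomogeneous_pairingHomogenization _ _
  refine ⟨Y, hY0, fun z hz => ?_⟩
  have hzz : ∑ i, z i * (conj ∘ z) i = 1 := by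
    simp only [Function.comp_apply, Complex.mul_conj']
    exact_mod_cast hz
  have hPconj : ∀ j, ((P j).map conj).totalDegree ≤ d := fun j =>
    (sup_mono (support_map_subset _ _)).trans (hP j)
  calc ∑ j, eval z (Y j) * conj (eval z (P j))
      = ∑ j, eval z (Y j) *
          eval₂ (eval z) (conj ∘ z) (pairingHomogenization d ((P j).map conj)) := by
        simp only [eval₂_pairingHomogenization hzz (hPconj _), map_eval]
    _ = eval₂ (eval z) (conj ∘ z)
          (∑ j, Y j • pairingHomogenization d ((P j).map conj)) := by
        simp only [smul_eq_C_mul, eval₂_sum, eval₂_mul, eval₂_C]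
    _ = 0 := by rw [hY, eval₂_zero]

end MvPolynomial

theorem small_target_dimension_implies_degenerate_general
    (n m d : ℕ)
    (hK : (n + d - 1).choose d < m)
    (U : Set (Fin n → ℂ))
    (hUS : {z : Fin n → ℂ | ∑ i, ‖z i‖ ^ 2 = 1} ⊆ U)
    (P : Fin m → MvPolynomial (Fin n) ℂ) (Q : MvPolynomial (Fin n) ℂ)
    (hPdeg : ∀ j, (P j).totalDegree ≤ d)
    (H : (Fin n → ℂ) → (Fin m → ℂ))
    (hH : ∀ z ∈ U, ∀ j, H z j = MvPolynomial.eval z (P j) / MvPolynomial.eval z Q) :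
    ∃ Y : Fin m → MvPolynomial (Fin n) ℂ,
      (∃ j, Y j ≠ 0) ∧
      ∀ z, (∑ i, ‖z i‖ ^ 2 = 1) →
        ∑ j, MvPolynomial.eval z (Y j) * (starRingEnd ℂ) (H z j) = 0 := by
  obtain ⟨Y, hY0, hY⟩ := MvPolynomial.exists_sum_eval_mul_conj_eval_eq_zero_on_sphere
    (by simpa using hK) P hPdeg
  refine ⟨Y, hY0, fun z hz => ?_⟩
  calc ∑ j, MvPolynomial.eval z (Y j) * conj (H z j)
      = (∑ j, MvPolynomial.eval z (Y j) * conj (MvPolynomial.eval z (P j)))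
          / conj (MvPolynomial.eval z Q) := by
        simp only [hH z (hUS hz), map_div₀, sum_div, mul_div_assoc]
    _ = 0 := by rw [hY z hz, zero_div]

/-- If a rational sphere map `H : S^{2n-1} → S^{2m-1}` of degree `d`
satisfies `K(n,d) = C(n+d-1,d) < m`, then `H` is holomorphically degenerate: there is a
nontrivial holomorphic polynomial map `Y : ℂⁿ → ℂᵐ` with `Y · conj H = 0` on the
sphere. -/
theorem small_target_dimension_implies_degenerate
    (n m d : ℕ) (hn : 2 ≤ n)
    (hK : (n + d - 1).choose d < m)
    (U : Set (Fin n → ℂ)) (hUopen : IsOpen U)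
    (hUS : {z : Fin n → ℂ | ∑ i, ‖z i‖ ^ 2 = 1} ⊆ U)
    (P : Fin m → MvPolynomial (Fin n) ℂ) (Q : MvPolynomial (Fin n) ℂ)
    (hPdeg : ∀ j, (P j).totalDegree ≤ d) (hQdeg : Q.totalDegree ≤ d)
    (hQ : ∀ z ∈ U, MvPolynomial.eval z Q ≠ 0)
    (H : (Fin n → ℂ) → (Fin m → ℂ))
    (hH : ∀ z ∈ U, ∀ j, H z j = MvPolynomial.eval z (P j) / MvPolynomial.eval z Q)
    (hHsphere : ∀ z, (∑ i, ‖z i‖ ^ 2 = 1) → ∑ j, ‖H z j‖ ^ 2 = 1) :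
    ∃ Y : Fin m → MvPolynomial (Fin n) ℂ,
      (∃ j, Y j ≠ 0) ∧
      ∀ z, (∑ i, ‖z i‖ ^ 2 = 1) →
        ∑ j, MvPolynomial.eval z (Y j) * (starRingEnd ℂ) (H z j) = 0 :=
  small_target_dimension_implies_degenerate_general n m d hK U hUS P Q hPdeg H hH
end

section
/- Let H : S^{2n-1} → S^{2m-1} be a polynomial sphere map of degree d with reflection matrix V_H satisfying V_H X · conj(H_n^d) = X · conj(H) on S^{2n-1} for all X ∈ ℂ^m. Then V_H H = H_n^d and H = transpose(conj(V_H)) H_n^d on S^{2n-1}. -/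
/-!
Testing `X = e_j` in the defining identity of `V_H` and conjugating gives
`H = ᵗ(conj V_H) H_n^d`. Testing `X = H(z)` and using `‖H‖ = ‖H_n^d‖ = 1` on the sphere gives
`∑_α (V_H H - H_n^d)_α(z) · conj (H_n^d)_α(z) = 0`, so `V_H H = H_n^d` follows from the
holomorphic nondegeneracy of `H_n^d`: if polynomials `R_α`, `|α| = d`, satisfy
`∑_α R_α(z) z̄^α = 0` on the sphere, then all `R_α` vanish. For the latter, rotating `z` by a
point `w` of the torus and multiplying by `w^d` makes the identity polynomial in `w`, so it holds
for all `w ∈ ℂⁿ`; taking `w = u / z` turns it into `∑_α R_α(u) u^(d-α) (|z|²)^α = 0`, a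
homogeneous polynomial identity in `|z|²` on the open simplex, so `R_α(u) u^(d-α) = 0`.
-/

open Finset

/-- The component of the homogeneous sphere map `H_n^d` at the multiindex `α`:
`√(d!/α!) z^α`. -/
noncomputable def homComp {n : ℕ} (α : Fin n → ℕ) (z : Fin n → ℂ) : ℂ :=
  (Real.sqrt (Nat.multinomial Finset.univ α) : ℂ) * ∏ i, z i ^ α i

open MvPolynomial ComplexConjugate

theorem MvPolynomial.eval_bind₁_C_mul_X {σ R : Type*} [CommSemiring R] (z x : σ → R)
    (p : MvPolynomial σ R) :
    eval x (bind₁ (fun i => C (z i) * X i) p) = eval (x * z) p := by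
  change eval₂Hom (RingHom.id R) x _ = _
  rw [eval₂Hom_bind₁]
  congr 2 with i
  simp [mul_comm]

theorem MvPolynomial.eval_sum_monomial_equivFunOnFinite {ι R : Type*} [Fintype ι]
    [CommSemiring R] (s : Finset (ι → ℕ)) (c : (ι → ℕ) → R) (x : ι → R) :
    eval x (∑ α ∈ s, monomial (Finsupp.equivFunOnFinite.symm α) (c α)) =
      ∑ α ∈ s, c α * ∏ i, x i ^ α i := by
  simp [eval_monomial, Finsupp.prod_fintype]

theorem MvPolynomial.coeff_sum_monomial_equivFunOnFinite {ι R : Type*} [Finite ι]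
    [CommSemiring R] {s : Finset (ι → ℕ)} (c : (ι → ℕ) → R) {α : ι → ℕ} (hα : α ∈ s) :
    coeff (Finsupp.equivFunOnFinite.symm α)
      (∑ β ∈ s, monomial (Finsupp.equivFunOnFinite.symm β) (c β)) = c α := by
  classical
  rw [coeff_sum, sum_eq_single_of_mem α hα, coeff_monomial, if_pos rfl]
  intro β _ hβα
  rw [coeff_monomial, if_neg (Finsupp.equivFunOnFinite.symm.injective.ne hβα)]

theorem Complex.sum_mul_conj {ι : Type*} (s : Finset ι) (f : ι → ℂ) :
    ∑ j ∈ s, f j * conj (f j) = ((∑ j ∈ s, ‖f j‖ ^ 2 : ℝ) : ℂ) := by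
  push_cast
  exact sum_congr rfl fun j _ => Complex.mul_conj' (f j)

theorem Complex.pow_sub_eq_pow_mul_conj_pow {w : ℂ} (hw : ‖w‖ = 1) {a d : ℕ} (had : a ≤ d) :
    w ^ (d - a) = w ^ d * conj w ^ a := by
  rw [← Nat.sub_add_cancel had, pow_add, Nat.add_sub_cancel, mul_assoc, ← mul_pow,
    Complex.mul_conj', hw]
  simp

theorem Complex.div_pow_sub_mul_conj_pow_mul_pow {u z : ℂ} (hz : z ≠ 0) {a d : ℕ} (had : a ≤ d) :
    (u / z) ^ (d - a) * conj z ^ a * z ^ d = u ^ (d - a) * ((‖z‖ ^ 2 : ℝ) : ℂ) ^ a := by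
  rw [← Nat.sub_add_cancel had, pow_add, Nat.add_sub_cancel, Complex.ofReal_pow,
    ← Complex.mul_conj', div_pow]
  field_simp
  ring

section Nondegeneracy

variable {ι : Type*} [Fintype ι] [DecidableEq ι]

theorem le_of_mem_piAntidiag_univ {d : ℕ} {α : ι → ℕ} (hα : α ∈ piAntidiag univ d) (i : ι) :
    α i ≤ d :=
  (mem_piAntidiag.1 hα).1 ▸ single_le_sum (fun j _ => Nat.zero_le (α j)) (mem_univ i)

theorem prod_ofReal_pow_eq_pow_mul_prod_div_pow {d : ℕ} {α : ι → ℕ}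
    (hα : α ∈ piAntidiag univ d) (t : ι → ℝ) {T : ℝ} (hT : T ≠ 0) :
    ∏ i, (t i : ℂ) ^ α i = (T : ℂ) ^ d * ∏ i, ((t i / T : ℝ) : ℂ) ^ α i := by
  rw [← (mem_piAntidiag.1 hα).1, ← prod_pow_eq_pow_sum, ← prod_mul_distrib]
  refine prod_congr rfl fun i _ => ?_
  push_cast
  rw [div_pow, mul_div_cancel₀ _ (pow_ne_zero _ (by exact_mod_cast hT))]

/-- By homogeneity the identity extends to the open positive orthant, a box with infinite
sides, on which a polynomial vanishes only if it is zero. -/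
theorem eq_zero_of_sum_mul_prod_pow_eq_zero_on_simplex [Nonempty ι] {d : ℕ}
    (c : (ι → ℕ) → ℂ)
    (h : ∀ t : ι → ℝ, (∀ i, 0 < t i) → ∑ i, t i = 1 →
      ∑ α ∈ piAntidiag univ d, c α * ∏ i, (t i : ℂ) ^ α i = 0) :
    ∀ α ∈ piAntidiag univ d, c α = 0 := by
  set p := ∑ α ∈ piAntidiag univ d, monomial (Finsupp.equivFunOnFinite.symm α) (c α)
  have hp : p = 0 := by
    refine funext_set (fun _ => Complex.ofReal '' Set.Ioi 0)
      (fun _ => (Set.Ioi_infinite 0).image Complex.ofReal_injective.injOn) fun x hx => ?_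
    choose t ht hxt using Set.mem_univ_pi.1 hx
    obtain rfl : x = fun i => (t i : ℂ) := funext fun i => (hxt i).symm
    have hT : 0 < ∑ i, t i := sum_pos (fun i _ => ht i) univ_nonempty
    have hsimplex := h (fun i => t i / ∑ j, t j) (fun i => div_pos (ht i) hT)
      (by rw [← sum_div, div_self hT.ne'])
    rw [eval_sum_monomial_equivFunOnFinite, map_zero]
    calc ∑ α ∈ piAntidiag univ d, c α * ∏ i, (t i : ℂ) ^ α i
        = ((∑ i, t i : ℝ) : ℂ) ^ d * ∑ α ∈ piAntidiag univ d,
            c α * ∏ i, ((t i / ∑ j, t j : ℝ) : ℂ) ^ α i := by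
          rw [mul_sum]
          refine sum_congr rfl fun α hα => ?_
          rw [prod_ofReal_pow_eq_pow_mul_prod_div_pow hα t hT.ne']
          ring
      _ = 0 := by rw [hsimplex, mul_zero]
  intro α hα
  rw [← coeff_sum_monomial_equivFunOnFinite c hα]
  change coeff _ p = 0
  rw [hp, coeff_zero]

variable {d : ℕ} {R : (ι → ℕ) → MvPolynomial ι ℂ}
  (hR : ∀ z : ι → ℂ, ∑ i, ‖z i‖ ^ 2 = 1 →
    ∑ α ∈ piAntidiag univ d, eval z (R α) * ∏ i, conj (z i) ^ α i = 0)
include hR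

theorem sum_eval_mul_pow_mul_conj_pow_eq_zero {z : ι → ℂ} (hz : ∑ i, ‖z i‖ ^ 2 = 1)
    (w : ι → ℂ) :
    ∑ α ∈ piAntidiag univ d,
      eval (w * z) (R α) * (∏ i, w i ^ (d - α i)) * ∏ i, conj (z i) ^ α i = 0 := by
  set Φ : MvPolynomial ι ℂ := ∑ α ∈ piAntidiag univ d,
    bind₁ (fun i => C (z i) * X i) (R α) * (∏ i, X i ^ (d - α i)) * C (∏ i, conj (z i) ^ α i)
  have hΦ (w : ι → ℂ) : eval w Φ = ∑ α ∈ piAntidiag univ d,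
      eval (w * z) (R α) * (∏ i, w i ^ (d - α i)) * ∏ i, conj (z i) ^ α i := by
    simp [Φ, eval_bind₁_C_mul_X]
  suffices Φ = 0 by rw [← hΦ, this, map_zero]
  refine funext_set (fun _ => Metric.sphere 0 1) (fun _ => ?_) fun w hw => ?_
  · exact (isPreconnected_sphere (by simp) 0 1).infinite_of_nontrivial
      ⟨1, by simp, -1, by simp, by norm_num⟩
  have hw : ∀ i, ‖w i‖ = 1 := by simpa using hw
  have hwz : ∑ i, ‖(w * z) i‖ ^ 2 = 1 := by simpa [norm_mul, hw] using hz
  rw [hΦ, map_zero, ← mul_zero (∏ i, w i ^ d), ← hR _ hwz, mul_sum]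
  refine sum_congr rfl fun α hα => ?_
  simp only [Complex.pow_sub_eq_pow_mul_conj_pow (hw _) (le_of_mem_piAntidiag_univ hα _),
    Pi.mul_apply, map_mul, mul_pow, prod_mul_distrib]
  ring

theorem sum_eval_mul_pow_mul_norm_sq_pow_eq_zero {z : ι → ℂ} (hz : ∑ i, ‖z i‖ ^ 2 = 1)
    (hz0 : ∀ i, z i ≠ 0) (u : ι → ℂ) :
    ∑ α ∈ piAntidiag univ d,
      eval u (R α) * (∏ i, u i ^ (d - α i)) * ∏ i, ((‖z i‖ ^ 2 : ℝ) : ℂ) ^ α i = 0 := by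
  have h := sum_eval_mul_pow_mul_conj_pow_eq_zero hR hz (u / z)
  have hu : u / z * z = u := funext fun i => div_mul_cancel₀ (u i) (hz0 i)
  rw [← zero_mul (∏ i, z i ^ d), ← h, sum_mul]
  refine sum_congr rfl fun α hα => ?_
  simp only [hu, mul_assoc, ← prod_mul_distrib, Pi.div_apply,
    Complex.div_pow_sub_mul_conj_pow_mul_pow (hz0 _) (le_of_mem_piAntidiag_univ hα _)]

theorem eq_zero_of_sum_eval_mul_conj_pow_eq_zero [Nonempty ι] :
    ∀ α ∈ piAntidiag univ d, R α = 0 := by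
  intro α hα
  have hprod : R α * ∏ i, X i ^ (d - α i) = 0 := by
    refine MvPolynomial.funext fun u => ?_
    simp only [map_mul, map_prod, map_pow, eval_X, map_zero]
    refine eq_zero_of_sum_mul_prod_pow_eq_zero_on_simplex
      (fun β => eval u (R β) * ∏ i, u i ^ (d - β i)) (fun t ht ht1 => ?_) α hα
    have hnorm (i : ι) : ‖(Real.sqrt (t i) : ℂ)‖ ^ 2 = t i := by
      rw [Complex.norm_real, Real.norm_of_nonneg (Real.sqrt_nonneg _), Real.sq_sqrt (ht i).le]
    simpa only [hnorm] using sum_eval_mul_pow_mul_norm_sq_pow_eq_zero hR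
      (z := fun i => Real.sqrt (t i)) (by simpa only [hnorm] using ht1)
      (fun i => Complex.ofReal_ne_zero.2 (Real.sqrt_pos.2 (ht i)).ne') u
  exact (mul_eq_zero.1 hprod).resolve_right
    (prod_ne_zero_iff.2 fun i _ => pow_ne_zero _ (X_ne_zero i))

end Nondegeneracy

section HomogeneousSphereMap

variable {n : ℕ}

noncomputable def homCompPoly (α : Fin n → ℕ) : MvPolynomial (Fin n) ℂ :=
  C (Real.sqrt (Nat.multinomial univ α) : ℂ) * ∏ i, X i ^ α i

theorem eval_homCompPoly (α : Fin n → ℕ) (z : Fin n → ℂ) :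
    eval z (homCompPoly α) = homComp α z := by
  simp [homCompPoly, homComp]

theorem conj_homComp (α : Fin n → ℕ) (z : Fin n → ℂ) :
    conj (homComp α z) = (Real.sqrt (Nat.multinomial univ α) : ℂ) * ∏ i, conj (z i) ^ α i := by
  simp [homComp, map_prod]

theorem sum_norm_sq_homComp (d : ℕ) (z : Fin n → ℂ) :
    ∑ α ∈ piAntidiag univ d, ‖homComp α z‖ ^ 2 = (∑ i, ‖z i‖ ^ 2) ^ d := by
  rw [sum_pow_eq_sum_piAntidiag]
  refine sum_congr rfl fun α _ => ?_
  rw [homComp, norm_mul, mul_pow, Complex.norm_real, Real.norm_of_nonneg (Real.sqrt_nonneg _),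
    Real.sq_sqrt (Nat.cast_nonneg _), norm_prod, ← prod_pow]
  simp only [norm_pow, ← pow_mul, mul_comm]

/-- Holomorphic nondegeneracy of `H_n^d` on the unit sphere. -/
theorem eq_zero_of_sum_eval_mul_conj_homComp_eq_zero [NeZero n] {d : ℕ}
    {F : (Fin n → ℕ) → MvPolynomial (Fin n) ℂ}
    (hF : ∀ z : Fin n → ℂ, ∑ i, ‖z i‖ ^ 2 = 1 →
      ∑ α ∈ piAntidiag univ d, eval z (F α) * conj (homComp α z) = 0) :
    ∀ α ∈ piAntidiag univ d, F α = 0 := by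
  have hmul := eq_zero_of_sum_eval_mul_conj_pow_eq_zero
    (R := fun α => C (Real.sqrt (Nat.multinomial univ α) : ℂ) * F α) fun z hz => by
      simpa only [conj_homComp, map_mul, eval_C, mul_assoc, mul_left_comm] using hF z hz
  intro α hα
  refine (mul_eq_zero.1 (hmul α hα)).resolve_left (C_ne_zero.2 ?_)
  exact Complex.ofReal_ne_zero.2 (Real.sqrt_pos.2 (by exact_mod_cast Nat.multinomial_pos _ _)).ne'

end HomogeneousSphereMap

theorem reflection_matrix_tensor_identities_general
    (n m d : ℕ)
    (P : Fin m → MvPolynomial (Fin n) ℂ)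
    (hPsphere : ∀ z : Fin n → ℂ, (∑ i, ‖z i‖ ^ 2 = 1) →
      ∑ j, ‖MvPolynomial.eval z (P j)‖ ^ 2 = 1)
    (V : (Fin n → ℕ) → Fin m → MvPolynomial (Fin n) ℂ)
    (hV : ∀ (X : Fin m → ℂ) (z : Fin n → ℂ), (∑ i, ‖z i‖ ^ 2 = 1) →
      ∑ α ∈ Finset.piAntidiag (Finset.univ : Finset (Fin n)) d,
          (∑ j, MvPolynomial.eval z (V α j) * X j) * (starRingEnd ℂ) (homComp α z) =
        ∑ j, X j * (starRingEnd ℂ) (MvPolynomial.eval z (P j))) :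
    ∀ z : Fin n → ℂ, (∑ i, ‖z i‖ ^ 2 = 1) →
      (∀ α ∈ Finset.piAntidiag (Finset.univ : Finset (Fin n)) d,
        ∑ j, MvPolynomial.eval z (V α j) * MvPolynomial.eval z (P j) = homComp α z) ∧
      (∀ j, MvPolynomial.eval z (P j) =
        ∑ α ∈ Finset.piAntidiag (Finset.univ : Finset (Fin n)) d,
          (starRingEnd ℂ) (MvPolynomial.eval z (V α j)) * homComp α z) := by
  intro z hz
  have : NeZero n := ⟨by rintro rfl; simp at hz⟩
  have hVH : ∀ α ∈ piAntidiag univ d, ∑ j, V α j * P j - homCompPoly α = 0 := by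
    refine eq_zero_of_sum_eval_mul_conj_homComp_eq_zero fun w hw => ?_
    have hVP := hV (fun j => eval w (P j)) w hw
    rw [Complex.sum_mul_conj, hPsphere w hw] at hVP
    simp only [map_sub, map_sum, map_mul, eval_homCompPoly, sub_mul, sum_sub_distrib, hVP,
      Complex.sum_mul_conj, sum_norm_sq_homComp, hw, one_pow, sub_self]
  refine ⟨fun α hα => ?_, fun j => ?_⟩
  · simpa [sub_eq_zero, eval_homCompPoly] using congrArg (eval z) (hVH α hα)
  · simpa [Pi.single_apply] using congrArg conj (hV (Pi.single j 1) z hz).symm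

/-- For a polynomial sphere map `H` of degree `d` with reflection
matrix `V_H` (so `V_H X · conj H_n^d = X · conj H` on the sphere for all constant
`X ∈ ℂᵐ`), one has `V_H H = H_n^d` and `H = ᵗ(conj V_H) H_n^d` on the sphere. -/
theorem reflection_matrix_tensor_identities
    (n m d : ℕ) (hn : 2 ≤ n)
    (P : Fin m → MvPolynomial (Fin n) ℂ)
    (hPdeg : ∀ j, (P j).totalDegree ≤ d)
    (hPsphere : ∀ z : Fin n → ℂ, (∑ i, ‖z i‖ ^ 2 = 1) →
      ∑ j, ‖MvPolynomial.eval z (P j)‖ ^ 2 = 1)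
    (V : (Fin n → ℕ) → Fin m → MvPolynomial (Fin n) ℂ)
    (hV : ∀ (X : Fin m → ℂ) (z : Fin n → ℂ), (∑ i, ‖z i‖ ^ 2 = 1) →
      ∑ α ∈ Finset.piAntidiag (Finset.univ : Finset (Fin n)) d,
          (∑ j, MvPolynomial.eval z (V α j) * X j) * (starRingEnd ℂ) (homComp α z) =
        ∑ j, X j * (starRingEnd ℂ) (MvPolynomial.eval z (P j))) :
    ∀ z : Fin n → ℂ, (∑ i, ‖z i‖ ^ 2 = 1) →
      (∀ α ∈ Finset.piAntidiag (Finset.univ : Finset (Fin n)) d,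
        ∑ j, MvPolynomial.eval z (V α j) * MvPolynomial.eval z (P j) = homComp α z) ∧
      (∀ j, MvPolynomial.eval z (P j) =
        ∑ α ∈ Finset.piAntidiag (Finset.univ : Finset (Fin n)) d,
          (starRingEnd ℂ) (MvPolynomial.eval z (V α j)) * homComp α z) :=
  reflection_matrix_tensor_identities_general n m d P hPsphere V hV
end

section
/- Let P : ℂ^n → ℂ^{K(n,d)} be a polynomial sphere map of degree d from S^{2n-1} to S^{2K(n,d)-1} whose top homogeneous part P_d equals U H_n^d for a unitary matrix U. Then P = U H_n^d; i.e. a polynomial sphere map whose degree-d homogeneous part is unitarily the homogeneous map has no lower-order terms. -/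
/-!
Write `P_j` for the degree-`j` homogeneous part of `P`. For `z` on the sphere and `|ω| = 1`,
`‖P(ωz)‖² = ∑_{j,l} ω^(j-l) ⟨P_j(z), P_l(z)⟩` is constant in `ω`, so its Fourier coefficient of
order `d - k` vanishes. If all `P_j` with `j < k` are already known to be zero, that coefficient is
`⟨P_d(z), P_k(z)⟩`, and by homogeneity it vanishes for every `z`. A polynomial in `z, z̄` that
vanishes identically is zero, so `z` and `z̄` may be treated as independent variables; fixing the
second one, linear independence of the components of `P_d = U H_n^d` forces `P_k = 0`.
Induction on `k < d` removes all lower-order terms.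
-/

open Finset

/-- The component of the homogeneous sphere map `H_n^d` at `α`, as a polynomial:
`√(d!/α!) z^α`. -/
noncomputable def homPoly {n : ℕ} (α : Fin n → ℕ) : MvPolynomial (Fin n) ℂ :=
  MvPolynomial.C ((Real.sqrt (Nat.multinomial Finset.univ α) : ℂ)) *
    ∏ i, MvPolynomial.X i ^ α i

open ComplexConjugate

theorem Complex.sphere_infinite (x : ℂ) {r : ℝ} (hr : 0 < r) : (Metric.sphere x r).Infinite :=
  (isPreconnected_sphere (by simp [Complex.rank_real_complex]) x r).infinite_of_nontrivial
    ⟨x + r, by simp [hr.le], x - r, by simp [hr.le], by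
      rw [sub_eq_add_neg, Ne, add_right_inj, eq_neg_iff_add_eq_zero, ← two_mul]
      simp [hr.ne']⟩

namespace Polynomial

theorem eval_reflect_map_conj {p : ℂ[X]} {N : ℕ} (hp : p.natDegree ≤ N) {ω : ℂ}
    (hω : ‖ω‖ = 1) : (reflect N (p.map (starRingEnd ℂ))).eval ω = ω ^ N * conj (p.eval ω) := by
  have hω0 : conj ω ≠ 0 := by simp [← norm_pos_iff, hω]
  let := invertibleOfNonzero hω0
  have hinv : ⅟(conj ω) = ω := by
    rw [invOf_eq_inv, Complex.inv_def, Complex.conj_conj, Complex.normSq_conj,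
      Complex.normSq_eq_norm_sq, hω]
    simp
  have h := eval₂_reflect_mul_pow (starRingEnd ℂ) (conj ω) N p hp
  rw [hinv, eval₂_at_apply] at h
  rw [reflect_map, eval_map, ← h, mul_comm _ (conj ω ^ N), ← mul_assoc, ← mul_pow,
    Complex.mul_conj', hω]
  simp

theorem natDegree_reflect_map_conj_le {p : ℂ[X]} {N k : ℕ} (hp : p.natDegree ≤ N)
    (hlow : ∀ j < k, p.coeff j = 0) : (reflect N (p.map (starRingEnd ℂ))).natDegree ≤ N - k := by
  refine natDegree_le_iff_coeff_eq_zero.mpr fun i hi => ?_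
  rw [coeff_reflect, coeff_map]
  rcases le_or_gt i N with hiN | hNi
  · rw [revAt_le hiN, hlow _ (by omega), map_zero]
  · rw [revAt_eq_self_of_lt hNi, coeff_eq_zero_of_natDegree_lt (by omega), map_zero]

theorem sum_coeff_mul_conj_coeff_eq_zero {ι : Type*} [Fintype ι] {p : ι → ℂ[X]} {d k : ℕ}
    (hkd : k < d) (hdeg : ∀ a, (p a).natDegree ≤ d) (hlow : ∀ a, ∀ j < k, (p a).coeff j = 0)
    (c : ℝ) (hc : ∀ ω : ℂ, ‖ω‖ = 1 → ∑ a, ‖(p a).eval ω‖ ^ 2 = c) :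
    ∑ a, (p a).coeff d * conj ((p a).coeff k) = 0 := by
  -- On the circle `conj ω = ω⁻¹`, so `ω ^ d * ∑ ‖p a ω‖ ^ 2 = c * ω ^ d` is a polynomial identity;
  -- in degree `2d - k` only the pair of coefficients `(d, k)` survives.
  set q := fun a => reflect d ((p a).map (starRingEnd ℂ))
  have hprod : ∑ a, p a * q a = C (c : ℂ) * X ^ d := by
    refine eq_of_infinite_eval_eq _ _ ((Complex.sphere_infinite 0 one_pos).mono fun ω hω => ?_)
    rw [mem_sphere_zero_iff_norm] at hω
    simp only [Set.mem_ofPred_eq, eval_finsetSum, eval_mul, q, eval_reflect_map_conj (hdeg _) hω,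
      eval_C, eval_X, eval_pow, ← hc ω hω]
    push_cast
    simp only [← Complex.mul_conj', Finset.sum_mul]
    exact Finset.sum_congr rfl fun a _ => by ring
  have := congrArg (coeff · (d + (d - k))) hprod
  simp only [finsetSum_coeff, coeff_C_mul_X_pow] at this
  rw [if_neg (by omega)] at this
  rw [← this]
  refine Finset.sum_congr rfl fun a _ => ?_
  rw [coeff_mul_add_eq_of_natDegree_le (hdeg a) (natDegree_reflect_map_conj_le (hdeg a) (hlow a)),
    coeff_reflect, coeff_map, revAt_le (by omega), Nat.sub_sub_self hkd.le]

end Polynomial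

namespace MvPolynomial

variable {σ R : Type*} [CommRing R]

theorem IsHomogeneous.eval_smul {φ : MvPolynomial σ R} {n : ℕ} (hφ : φ.IsHomogeneous n)
    (c : R) (x : σ → R) : eval (c • x) φ = c ^ n * eval x φ := by
  simp only [eval_eq, Finset.mul_sum]
  refine Finset.sum_congr rfl fun s hs => ?_
  simp only [Pi.smul_apply, smul_eq_mul, mul_pow, Finset.prod_mul_distrib,
    Finset.prod_pow_eq_pow_sum, ← hφ.degree_eq_sum_deg_support hs]
  ring

noncomputable def lineRestriction (p : MvPolynomial σ R) (z : σ → R) : Polynomial R :=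
  ∑ j ∈ range (p.totalDegree + 1),
    Polynomial.C (eval z (homogeneousComponent j p)) * Polynomial.X ^ j

theorem coeff_lineRestriction (p : MvPolynomial σ R) (z : σ → R) (j : ℕ) :
    (lineRestriction p z).coeff j = eval z (homogeneousComponent j p) := by
  simp only [lineRestriction, Polynomial.finsetSum_coeff, Polynomial.coeff_C_mul_X_pow,
    Finset.sum_ite_eq, Finset.mem_range]
  split_ifs with hj
  · rfl
  · rw [homogeneousComponent_eq_zero _ _ (by omega), map_zero]

theorem natDegree_lineRestriction_le (p : MvPolynomial σ R) (z : σ → R) :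
    (lineRestriction p z).natDegree ≤ p.totalDegree :=
  Polynomial.natDegree_sum_le_of_forall_le _ _ fun _ hj =>
    (Polynomial.natDegree_C_mul_X_pow_le _ _).trans (Nat.lt_succ_iff.mp (Finset.mem_range.mp hj))

theorem eval_lineRestriction (p : MvPolynomial σ R) (z : σ → R) (ω : R) :
    (lineRestriction p z).eval ω = eval (ω • z) p := by
  conv_rhs => rw [← sum_homogeneousComponent p]
  simp only [lineRestriction, Polynomial.eval_finsetSum, Polynomial.eval_mul, Polynomial.eval_C,
    Polynomial.eval_pow, Polynomial.eval_X, map_sum,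
    (homogeneousComponent_isHomogeneous _ p).eval_smul]
  exact Finset.sum_congr rfl fun j _ => mul_comm _ _

theorem eq_homogeneousComponent_of_totalDegree_le {p : MvPolynomial σ R} {d : ℕ}
    (hp : p.totalDegree ≤ d) (h : ∀ k < d, homogeneousComponent k p = 0) :
    p = homogeneousComponent d p :=
  calc p = ∑ j ∈ range (d + 1), homogeneousComponent j p := by
        rw [← Finset.sum_subset (range_subset_range.mpr (Nat.succ_le_succ hp)) fun j _ hj =>
          homogeneousComponent_eq_zero _ _ (by rw [Finset.mem_range] at hj; omega),
          sum_homogeneousComponent]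
    _ = homogeneousComponent d p :=
        Finset.sum_eq_single_of_mem d (by simp) fun j hj hjd =>
          h j (by rw [Finset.mem_range] at hj; omega)

theorem conj_eval (z : σ → ℂ) (p : MvPolynomial σ ℂ) :
    conj (eval z p) = eval (fun i => conj (z i)) (map (starRingEnd ℂ) p) := by
  rw [eval₂_comp, eval_map]; rfl

theorem eq_zero_of_forall_eval_sumElim_conj_eq_zero {F : MvPolynomial (σ ⊕ σ) ℂ}
    (h : ∀ z : σ → ℂ, eval (Sum.elim z fun i => conj (z i)) F = 0) : F = 0 := by
  -- `φ` substitutes `(x + iy, x - iy)` for `(z, z̄)` and `ψ` inverts it; `F ∘ φ` vanishes on real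
  -- points, hence is zero.
  set φ : σ ⊕ σ → MvPolynomial (σ ⊕ σ) ℂ :=
    Sum.elim (fun i => X (.inl i) + C Complex.I * X (.inr i))
      (fun i => X (.inl i) - C Complex.I * X (.inr i))
  set ψ : σ ⊕ σ → MvPolynomial (σ ⊕ σ) ℂ :=
    Sum.elim (fun i => C (1 / 2) * (X (.inl i) + X (.inr i)))
      (fun i => C (-Complex.I / 2) * (X (.inl i) - X (.inr i)))
  have hψφ : (bind₁ ψ).comp (bind₁ φ) = AlgHom.id ℂ _ := by
    rw [bind₁_comp_bind₁, ← bind₁_X_left]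
    congr 1
    funext s
    have hI : (C Complex.I * C (-Complex.I / 2) : MvPolynomial (σ ⊕ σ) ℂ) = C (1 / 2) := by
      rw [← C_mul]; congr 1; linear_combination (-1 / 2 : ℂ) * Complex.I_mul_I
    have hhalf : (C (1 / 2) + C (1 / 2) : MvPolynomial (σ ⊕ σ) ℂ) = 1 := by
      rw [← C_add]; norm_num
    cases s with
    | inl i =>
      simp only [φ, ψ, Sum.elim_inl, Sum.elim_inr, map_add, map_mul, bind₁_X_right, bind₁_C_right]
      linear_combination (X (.inl i) - X (.inr i)) * hI + X (.inl i) * hhalf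
    | inr i =>
      simp only [φ, ψ, Sum.elim_inl, Sum.elim_inr, map_sub, map_mul, bind₁_X_right, bind₁_C_right]
      linear_combination (X (.inr i) - X (.inl i)) * hI + X (.inr i) * hhalf
  have hφF : bind₁ φ F = 0 := by
    refine funext_set (fun _ => {w | conj w = w})
      (fun _ => (Set.infinite_range_of_injective Complex.ofReal_injective).mono
        (Set.range_subset_iff.mpr Complex.conj_ofReal)) fun x hx => ?_
    set z : σ → ℂ := fun i => x (.inl i) + Complex.I * x (.inr i)
    have hφx : (fun s => eval x (φ s)) = Sum.elim z fun i => conj (z i) := by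
      funext s
      cases s with
      | inl i => simp [φ, z]
      | inr i =>
        have hl : conj (x (.inl i)) = x (.inl i) := hx _ trivial
        have hr : conj (x (.inr i)) = x (.inr i) := hx _ trivial
        simp [φ, z, hl, hr, sub_eq_add_neg]
    rw [map_zero, ← h z, eval, eval₂Hom_bind₁]
    exact congrArg (fun g => eval g F) hφx
  simpa [hφF] using (congrArg (· F) hψφ).symm

end MvPolynomial

theorem exists_eq_ofReal_smul_unit_sphere {σ : Type*} [Fintype σ] {z : σ → ℂ}
    (hz : z ≠ 0) : ∃ r : ℝ, ∃ w : σ → ℂ, ∑ i, ‖w i‖ ^ 2 = 1 ∧ z = (r : ℂ) • w := by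
  set x : EuclideanSpace ℂ σ := WithLp.toLp 2 z
  have hx : ‖x‖ ≠ 0 := by simpa [x] using hz
  refine ⟨‖x‖, ((‖x‖⁻¹ : ℝ) : ℂ) • z, ?_, ?_⟩
  · have h : ∑ i, ‖z i‖ ^ 2 = ‖x‖ ^ 2 := (EuclideanSpace.norm_sq_eq x).symm
    simp only [Pi.smul_apply, smul_eq_mul, norm_mul, mul_pow, ← Finset.mul_sum, h,
      Complex.norm_real, norm_inv, norm_norm]
    field_simp
  · rw [smul_smul, ← Complex.ofReal_mul, mul_inv_cancel₀ hx, Complex.ofReal_one, one_smul]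

open MvPolynomial in
theorem sum_eval_mul_conj_eq_zero_of_forall_sphere {ι σ : Type*} [Fintype ι] [Fintype σ]
    {p q : ι → MvPolynomial σ ℂ} {d k : ℕ} (hp : ∀ a, (p a).IsHomogeneous d)
    (hq : ∀ a, (q a).IsHomogeneous k) (hd : d ≠ 0)
    (h : ∀ w : σ → ℂ, ∑ i, ‖w i‖ ^ 2 = 1 → ∑ a, eval w (p a) * conj (eval w (q a)) = 0)
    (z : σ → ℂ) : ∑ a, eval z (p a) * conj (eval z (q a)) = 0 := by
  rcases eq_or_ne z 0 with rfl | hz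
  · refine Finset.sum_eq_zero fun a _ => ?_
    rw [← zero_smul ℂ (0 : σ → ℂ), (hp a).eval_smul, zero_pow hd, zero_mul, zero_mul]
  obtain ⟨r, w, hw, rfl⟩ := exists_eq_ofReal_smul_unit_sphere hz
  simp only [(hp _).eval_smul, (hq _).eval_smul, map_mul, map_pow, Complex.conj_ofReal]
  rw [← mul_zero ((r : ℂ) ^ d * (r : ℂ) ^ k), ← h w hw, Finset.mul_sum]
  exact Finset.sum_congr rfl fun a _ => by ring

theorem LinearIndependent.sum_smul_of_isUnit {ι R M : Type*} [Fintype ι] [DecidableEq ι] [Ring R]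
    [AddCommGroup M] [Module R M] {v : ι → M} (hv : LinearIndependent R v) {A : Matrix ι ι R}
    (hA : IsUnit A) : LinearIndependent R fun a => ∑ b, A a b • v b :=
  (Matrix.linearIndependent_rows_of_isUnit hA).map' (Fintype.linearCombination R v)
    (LinearMap.ker_eq_bot.mpr hv.fintypeLinearCombination_injective)

open MvPolynomial in
theorem LinearIndependent.eq_zero_of_forall_sum_eval_mul_conj_eq_zero {ι σ : Type*} [Fintype ι]
    {v M : ι → MvPolynomial σ ℂ} (hv : LinearIndependent ℂ v)
    (h : ∀ z, ∑ b, eval z (v b) * conj (eval z (M b)) = 0) (b : ι) : M b = 0 := by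
  set N := fun b => MvPolynomial.map (starRingEnd ℂ) (M b)
  have hR : ∑ b, rename Sum.inl (v b) * rename Sum.inr (N b) = 0 :=
    eq_zero_of_forall_eval_sumElim_conj_eq_zero fun z => by
      simpa [eval_rename, Function.comp_def, N, conj_eval] using h z
  have hN : ∀ w, eval w (N b) = 0 := fun w => by
    refine Fintype.linearIndependent_iff.mp hv (fun b => eval w (N b)) ?_ b
    refine MvPolynomial.funext fun x => ?_
    simpa [eval_rename, Function.comp_def, mul_comm] using congrArg (eval (Sum.elim x w)) hR
  have hN0 : N b = MvPolynomial.map (starRingEnd ℂ) 0 := by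
    rw [map_zero]; exact MvPolynomial.funext fun w => by simp [hN w]
  exact MvPolynomial.map_injective _ (starRingEnd ℂ).injective hN0

theorem homPoly_eq_monomial {n : ℕ} (α : Fin n → ℕ) :
    homPoly α = MvPolynomial.monomial (Finsupp.equivFunOnFinite.symm α)
      (Real.sqrt (Nat.multinomial Finset.univ α) : ℂ) := by
  have hprod : ∏ i, (MvPolynomial.X i : MvPolynomial (Fin n) ℂ) ^ α i
      = MvPolynomial.monomial (Finsupp.equivFunOnFinite.symm α) 1 := by
    rw [← MvPolynomial.prod_X_pow_eq_monomial]
    refine (Finset.prod_subset (Finset.subset_univ _) fun i _ hi => ?_).symm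
    rw [show α i = 0 from Finsupp.notMem_support_iff.mp hi, pow_zero]
  rw [homPoly, hprod, MvPolynomial.C_mul_monomial, mul_one]

theorem linearIndependent_homPoly (n : ℕ) :
    LinearIndependent ℂ (homPoly : (Fin n → ℕ) → MvPolynomial (Fin n) ℂ) := by
  have hc : ∀ α : Fin n → ℕ, (Real.sqrt (Nat.multinomial Finset.univ α) : ℂ) ≠ 0 := fun α => by
    simpa using (Nat.multinomial_pos _ _).ne'
  have hhom : homPoly = (fun α => Units.mk0 _ (hc α)) •
      (MvPolynomial.basisMonomials (Fin n) ℂ ∘ Finsupp.equivFunOnFinite.symm) := by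
    funext α
    simp only [Pi.smul_apply', Function.comp_apply, MvPolynomial.coe_basisMonomials,
      Units.smul_mk0, MvPolynomial.smul_monomial, smul_eq_mul, mul_one, homPoly_eq_monomial]
  rw [hhom]
  exact ((MvPolynomial.basisMonomials (Fin n) ℂ).linearIndependent.comp _
    Finsupp.equivFunOnFinite.symm.injective).units_smul _

open MvPolynomial

theorem homogeneousComponent_eq_zero_of_sum_norm_sq_eval_eq_on_sphere {ι σ : Type*} [Fintype ι]
    [Fintype σ] {P : ι → MvPolynomial σ ℂ} {d : ℕ} (c : ℝ) (hdeg : ∀ a, (P a).totalDegree ≤ d)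
    (hsphere : ∀ z : σ → ℂ, ∑ i, ‖z i‖ ^ 2 = 1 → ∑ a, ‖eval z (P a)‖ ^ 2 = c)
    (hlin : LinearIndependent ℂ fun a => homogeneousComponent d (P a)) :
    ∀ k < d, ∀ a, homogeneousComponent k (P a) = 0 := by
  intro k
  induction k using Nat.strong_induction_on with
  | _ k ih =>
  intro hk
  have hsph : ∀ z : σ → ℂ, ∑ i, ‖z i‖ ^ 2 = 1 → ∑ a, eval z (homogeneousComponent d (P a)) *
      conj (eval z (homogeneousComponent k (P a))) = 0 := fun z hz => by
    simpa only [coeff_lineRestriction] using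
      Polynomial.sum_coeff_mul_conj_coeff_eq_zero (p := fun a => lineRestriction (P a) z) hk
        (fun a => (natDegree_lineRestriction_le _ _).trans (hdeg a))
        (fun a j hj => by rw [coeff_lineRestriction, ih j hj (hj.trans hk) a, map_zero]) c
        fun ω hω => by
          simp only [eval_lineRestriction]
          exact hsphere _ (by simpa [norm_mul, hω, mul_pow] using hz)
  exact hlin.eq_zero_of_forall_sum_eval_mul_conj_eq_zero
    (sum_eval_mul_conj_eq_zero_of_forall_sphere (fun _ => homogeneousComponent_isHomogeneous _ _)
      (fun _ => homogeneousComponent_isHomogeneous _ _) (by omega) hsph)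

theorem polynomial_sphere_map_with_homogeneous_top_is_homogeneous_general
    (n d : ℕ)
    (P : {α // α ∈ Finset.piAntidiag (Finset.univ : Finset (Fin n)) d} →
      MvPolynomial (Fin n) ℂ)
    (hPdeg : ∀ a, (P a).totalDegree ≤ d)
    (hPsphere : ∀ z : Fin n → ℂ, (∑ i, ‖z i‖ ^ 2 = 1) →
      ∑ a, ‖MvPolynomial.eval z (P a)‖ ^ 2 = 1)
    (U : Matrix {α // α ∈ Finset.piAntidiag (Finset.univ : Finset (Fin n)) d}
      {α // α ∈ Finset.piAntidiag (Finset.univ : Finset (Fin n)) d} ℂ)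
    (hU : U ∈ Matrix.unitaryGroup
      {α // α ∈ Finset.piAntidiag (Finset.univ : Finset (Fin n)) d} ℂ)
    (htop : ∀ a, MvPolynomial.homogeneousComponent d (P a) =
      ∑ b, MvPolynomial.C (U a b) * homPoly b.1) :
    ∀ a, P a = ∑ b, MvPolynomial.C (U a b) * homPoly b.1 := by
  have hlin : LinearIndependent ℂ fun a => homogeneousComponent d (P a) := by
    simp_rw [htop, ← smul_eq_C_mul]
    exact ((linearIndependent_homPoly n).comp _ Subtype.val_injective).sum_smul_of_isUnit
      (Unitary.isUnit_coe (U := ⟨U, hU⟩))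
  intro a
  rw [← htop a]
  exact eq_homogeneousComponent_of_totalDegree_le (hPdeg a) fun k hk =>
    homogeneousComponent_eq_zero_of_sum_norm_sq_eval_eq_on_sphere 1 hPdeg hPsphere hlin k hk a

/-- A polynomial sphere map `P : S^{2n-1} → S^{2K(n,d)-1}` of degree
`d` whose top-degree homogeneous part equals `U H_n^d` for a unitary matrix `U` has no
lower-order terms: `P = U H_n^d`. -/
theorem polynomial_sphere_map_with_homogeneous_top_is_homogeneous
    (n d : ℕ) (hn : 2 ≤ n) (hd : 1 ≤ d)
    (P : {α // α ∈ Finset.piAntidiag (Finset.univ : Finset (Fin n)) d} →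
      MvPolynomial (Fin n) ℂ)
    (hPdeg : ∀ a, (P a).totalDegree ≤ d)
    (hPsphere : ∀ z : Fin n → ℂ, (∑ i, ‖z i‖ ^ 2 = 1) →
      ∑ a, ‖MvPolynomial.eval z (P a)‖ ^ 2 = 1)
    (U : Matrix {α // α ∈ Finset.piAntidiag (Finset.univ : Finset (Fin n)) d}
      {α // α ∈ Finset.piAntidiag (Finset.univ : Finset (Fin n)) d} ℂ)
    (hU : U ∈ Matrix.unitaryGroup
      {α // α ∈ Finset.piAntidiag (Finset.univ : Finset (Fin n)) d} ℂ)
    (htop : ∀ a, MvPolynomial.homogeneousComponent d (P a) =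
      ∑ b, MvPolynomial.C (U a b) * homPoly b.1) :
    ∀ a, P a = ∑ b, MvPolynomial.C (U a b) * homPoly b.1 :=
  polynomial_sphere_map_with_homogeneous_top_is_homogeneous_general n d P hPdeg hPsphere U hU htop
end
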